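/- For every k ≤ n/2, every RTLW(k) refutation of the functional pigeonhole principle clauses FPHP_n has size at least 2^{c·n·log n} for some absolute constant c > 0 (e.g., size at least (1/2)·(n/8)^{n/8}). -/

import Mathlib

open Classical

noncomputable section

abbrev Var := ℕ
abbrev Lit := Var × Bool

def Lit.neg (l : Lit) : Lit := (l.1, !l.2)
def posLit (x : Var) : Lit := (x, true)
def negLit (x : Var) : Lit := (x, false)

abbrev Clause := Finset Lit
abbrev CNF := Set Clause
abbrev Assign := Var → Option Bool

def Assign.set (α : Assign) (x : Var) (b : Bool) : Assign :=
  fun y => if y = x then some b else α y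

def emptyAssign : Assign := fun _ => none

/-- `α` assigns the value false to every literal of `C` (i.e. `C↾α = 0`). -/
def falsifies (α : Assign) (C : Clause) : Prop := ∀ l ∈ C, α l.1 = some (!l.2)

def satLit (α : Assign) (l : Lit) : Prop := α l.1 = some l.2

/-- `F↾α = 0`. -/
def CNFFalse (F : CNF) (α : Assign) : Prop := ∃ C ∈ F, falsifies α C

/-- `F↾α = 1`. -/
def CNFTrue (F : CNF) (α : Assign) : Prop := ∀ C ∈ F, ∃ l ∈ C, satLit α l

def Unsat (F : CNF) : Prop := ¬ ∃ β : Var → Bool, ∀ C ∈ F, ∃ l ∈ C, β l.1 = l.2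

/-- The (w-)resolvent of `C0` and `C1` on the variable `x`. -/
def Resolvent (C0 C1 : Clause) (x : Var) : Clause :=
  C0.erase (posLit x) ∪ C1.erase (negLit x)

/-- A resolution derivation, as a sequence of clauses. -/
def IsResDeriv (F : CNF) (L : List Clause) : Prop :=
  ∀ i (hi : i < L.length),
    L[i] ∈ F ∨ ∃ j k x, ∃ hj : j < L.length, ∃ hk : k < L.length, j < i ∧ k < i ∧
      posLit x ∈ L[j] ∧ negLit x ∈ L[k] ∧ L[i] = Resolvent L[j] L[k] x

/-- A w-resolution derivation: no membership requirements on the resolved variable. -/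
def IsWResDeriv (F : CNF) (L : List Clause) : Prop :=
  ∀ i (hi : i < L.length),
    L[i] ∈ F ∨ ∃ j k x, ∃ hj : j < L.length, ∃ hk : k < L.length, j < i ∧ k < i ∧
      L[i] = Resolvent L[j] L[k] x

/-- A derivation using resolution and the weakening rule. -/
def IsResWeakDeriv (F : CNF) (L : List Clause) : Prop :=
  ∀ i (hi : i < L.length),
    L[i] ∈ F ∨
    (∃ j, ∃ hj : j < L.length, j < i ∧ L[j] ⊆ L[i]) ∨
    ∃ j k x, ∃ hj : j < L.length, ∃ hk : k < L.length, j < i ∧ k < i ∧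
      posLit x ∈ L[j] ∧ negLit x ∈ L[k] ∧ L[i] = Resolvent L[j] L[k] x

/-- Ordered binary resolution trees (nodes carry their clause and resolution variable). -/
inductive RTree where
  | leaf (C : Clause)
  | node (C : Clause) (x : Var) (t0 t1 : RTree)

namespace RTree

def conc : RTree → Clause
  | leaf C => C
  | node C _ _ _ => C

def size : RTree → ℕ
  | leaf _ => 1
  | node _ _ t0 t1 => t0.size + t1.size + 1

def resVars : RTree → Finset Var
  | leaf _ => ∅
  | node _ x t0 t1 => insert x (t0.resVars ∪ t1.resVars)

def allClauses : RTree → Set Clause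
  | leaf C => {C}
  | node C _ t0 t1 => {C} ∪ t0.allClauses ∪ t1.allClauses

def derivedClauses : RTree → Set Clause
  | leaf _ => ∅
  | node C _ t0 t1 => {C} ∪ t0.derivedClauses ∪ t1.derivedClauses

def leafClauses : RTree → Set Clause
  | leaf C => {C}
  | node _ _ t0 t1 => t0.leafClauses ∪ t1.leafClauses

def isLeaf : RTree → Prop
  | leaf _ => True
  | node _ _ _ _ => False

/-- Every internal node has at least one leaf child: input trees. -/
def inputShape : RTree → Prop
  | leaf _ => True
  | node _ _ t0 t1 => (t0.isLeaf ∨ t1.isLeaf) ∧ t0.inputShape ∧ t1.inputShape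

/-- All inferences are proper (ordinary) resolution inferences. -/
def properRes : RTree → Prop
  | leaf _ => True
  | node C x t0 t1 => posLit x ∈ t0.conc ∧ negLit x ∈ t1.conc ∧
      C = Resolvent t0.conc t1.conc x ∧ t0.properRes ∧ t1.properRes

/-- The clauses of the input-derived nodes of a tree (subtrees that are input
resolution proofs). -/
def inputClauses : RTree → Set Clause
  | leaf C => {C}
  | node C x t0 t1 =>
      (if (RTree.node C x t0 t1).inputShape ∧ (RTree.node C x t0 t1).properRes
        then ({C} : Set Clause) else ∅)
      ∪ t0.inputClauses ∪ t1.inputClauses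

/-- Number of non-input-derived nodes. -/
def nonInputCount : RTree → ℕ
  | leaf _ => 0
  | node C x t0 t1 =>
      (if (RTree.node C x t0 t1).inputShape ∧ (RTree.node C x t0 t1).properRes
        then 0 else 1)
      + t0.nonInputCount + t1.nonInputCount

/-- Regularity: no variable is used twice as resolution variable on a path. -/
def regAux : RTree → Set Var → Prop
  | leaf _, _ => True
  | node _ x t0 t1, s => x ∉ s ∧ t0.regAux (insert x s) ∧ t1.regAux (insert x s)

def regular (t : RTree) : Prop := t.regAux ∅

end RTree

/-- An ordinary resolution tree with all leaves labeled by clauses of `F`. -/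
def IsResTreeFrom (F : CNF) : RTree → Prop
  | .leaf C => C ∈ F
  | .node C x t0 t1 => IsResTreeFrom F t0 ∧ IsResTreeFrom F t1 ∧
      posLit x ∈ t0.conc ∧ negLit x ∈ t1.conc ∧ C = Resolvent t0.conc t1.conc x

/-- Resolution tree with input lemmas; `avail` is the set of lemmas available
from earlier (in post-order) input-derived nodes. -/
def IsRTI (F : CNF) : RTree → Set Clause → Prop
  | .leaf C, avail => C ∈ F ∨ C ∈ avail
  | .node C x t0 t1, avail => IsRTI F t0 avail ∧ IsRTI F t1 (avail ∪ t0.inputClauses) ∧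
      posLit x ∈ t0.conc ∧ negLit x ∈ t1.conc ∧ C = Resolvent t0.conc t1.conc x

/-- w-resolution tree with input lemmas. -/
def IsWRTI (F : CNF) : RTree → Set Clause → Prop
  | .leaf C, avail => C ∈ F ∨ C ∈ avail
  | .node C x t0 t1, avail => IsWRTI F t0 avail ∧ IsWRTI F t1 (avail ∪ t0.inputClauses) ∧
      C = Resolvent t0.conc t1.conc x

/-- Resolution tree with (arbitrary earlier) lemmas. -/
def IsRTL (F : CNF) : RTree → Set Clause → Prop
  | .leaf C, avail => C ∈ F ∨ C ∈ avail
  | .node C x t0 t1, avail => IsRTL F t0 avail ∧ IsRTL F t1 (avail ∪ t0.allClauses) ∧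
      posLit x ∈ t0.conc ∧ negLit x ∈ t1.conc ∧ C = Resolvent t0.conc t1.conc x

/-- w-resolution tree with (arbitrary earlier) lemmas. -/
def IsWRTL (F : CNF) : RTree → Set Clause → Prop
  | .leaf C, avail => C ∈ F ∨ C ∈ avail
  | .node C x t0 t1, avail => IsWRTL F t0 avail ∧ IsWRTL F t1 (avail ∪ t0.allClauses) ∧
      C = Resolvent t0.conc t1.conc x

/-- Resolution dags, presented in a topological order; node `n-1` is the conclusion. -/
structure RDag (F : CNF) where
  n : ℕ
  npos : 0 < n
  clause : Fin n → Clause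
  pred : Fin n → Option (Fin n × Fin n × Var)
  topo : ∀ i p, pred i = some p → p.1 < i ∧ p.2.1 < i
  leaf_mem : ∀ i, pred i = none → clause i ∈ F
  res_ok : ∀ i j k x, pred i = some (j, k, x) →
    posLit x ∈ clause j ∧ negLit x ∈ clause k ∧ clause i = Resolvent (clause j) (clause k) x

namespace RDag

variable {F : CNF}

def root (R : RDag F) : Fin R.n := ⟨R.n - 1, Nat.sub_lt R.npos one_pos⟩

def parent (R : RDag F) (j i : Fin R.n) : Prop :=
  ∃ p, R.pred i = some p ∧ (p.1 = j ∨ p.2.1 = j)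

def resVar (R : RDag F) (i : Fin R.n) : Option Var := (R.pred i).map (fun p => p.2.2)

def regular (R : RDag F) : Prop :=
  ∀ i j x, Relation.TransGen R.parent j i → R.resVar i = some x → R.resVar j ≠ some x

/-- `PathLen R i m`: there is a path with `m` edges from some leaf of `R` to `i`. -/
inductive PathLen (R : RDag F) : Fin R.n → ℕ → Prop
  | leaf (i) (h : R.pred i = none) : PathLen R i 0
  | step (i j m) (h : R.parent j i) (hj : PathLen R j m) : PathLen R i (m + 1)

end RDag

/-- w-resolution dags. -/
structure WRDag (F : CNF) where
  n : ℕ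
  npos : 0 < n
  clause : Fin n → Clause
  pred : Fin n → Option (Fin n × Fin n × Var)
  topo : ∀ i p, pred i = some p → p.1 < i ∧ p.2.1 < i
  leaf_mem : ∀ i, pred i = none → clause i ∈ F
  res_ok : ∀ i j k x, pred i = some (j, k, x) →
    clause i = Resolvent (clause j) (clause k) x

namespace WRDag

variable {F : CNF}

def root (R : WRDag F) : Fin R.n := ⟨R.n - 1, Nat.sub_lt R.npos one_pos⟩

def parent (R : WRDag F) (j i : Fin R.n) : Prop :=
  ∃ p, R.pred i = some p ∧ (p.1 = j ∨ p.2.1 = j)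

def resVar (R : WRDag F) (i : Fin R.n) : Option Var := (R.pred i).map (fun p => p.2.2)

def regular (R : WRDag F) : Prop :=
  ∀ i j x, Relation.TransGen R.parent j i → R.resVar i = some x → R.resVar j ≠ some x

def IsRefutation (R : WRDag F) : Prop := R.clause R.root = ∅

/-- `PathLits R v S`: there is a path from `v` to the root of `R` whose set of
edge labels is `S` (the edge from the first premise is labeled `¬x`, from the
second premise `x`). -/
inductive PathLits (R : WRDag F) : Fin R.n → Set Lit → Prop
  | root : PathLits R R.root ∅
  | left (i j k x S) (h : R.pred i = some (j, k, x)) (hi : PathLits R i S) :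
      PathLits R j (insert (negLit x) S)
  | right (i j k x S) (h : R.pred i = some (j, k, x)) (hi : PathLits R i S) :
      PathLits R k (insert (posLit x) S)

end WRDag
/-- A conflict graph for `F` under `α`.  The special node `□` is left implicit:
`x` is the conflict variable, and the edges from `x` and `¬x` to `□` are not
represented. -/
structure ConflictGraph (F : CNF) (α : Assign) where
  V : Finset Lit
  E : Finset (Lit × Lit)
  x : Var
  pos_mem : posLit x ∈ V
  neg_mem : negLit x ∈ V
  uniq : ∀ y, posLit y ∈ V → negLit y ∈ V → y = x
  edges_mem : ∀ e ∈ E, e.1 ∈ V ∧ e.2 ∈ V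
  acyclic : ∃ rank : Lit → ℕ, ∀ e ∈ E, rank e.1 < rank e.2
  leaf_true : ∀ l ∈ V, (∀ e ∈ E, e.2 ≠ l) → α l.1 = some l.2
  internal_clause : ∀ l ∈ V, (∃ e ∈ E, e.2 = l) →
      insert l ((V.filter (fun p => (p, l) ∈ E)).image Lit.neg) ∈ F
  sink : ∀ l ∈ V, (∃ e ∈ E, e.1 = l) ∨ l = posLit x ∨ l = negLit x

namespace ConflictGraph

variable {F : CNF} {α : Assign}

def leaves (G : ConflictGraph F α) : Finset Lit :=
  G.V.filter (fun l => ∀ e ∈ G.E, e.2 ≠ l)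

/-- The conflict clause: negations of the leaf literals. -/
def conflictClause (G : ConflictGraph F α) : Clause := G.leaves.image Lit.neg

def Reach (G : ConflictGraph F α) (a b : Lit) : Prop :=
  Relation.ReflTransGen (fun u v => (u, v) ∈ G.E) a b

/-- The induced clause of a literal `l`. -/
def inducedClause (G : ConflictGraph F α) (l : Lit) : Clause :=
  insert l ((G.leaves.filter (fun p => G.Reach p l)).image Lit.neg)

end ConflictGraph

/-- `H` is a subconflict graph of `G`. -/
def Subconflict {F : CNF} {α : Assign} (H G : ConflictGraph F α) : Prop :=
  H.V ⊆ G.V ∧ H.E ⊆ G.E ∧ H.x = G.x ∧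
  ∀ l ∈ H.V, (∃ e ∈ H.E, e.2 = l) → ∀ e ∈ G.E, e.2 = l → e ∈ H.E

/-- `H` is a proper subconflict graph of `G`: additionally, no path in `G` runs
from a non-leaf vertex of `H` to a leaf of `H`. -/
def ProperSub {F : CNF} {α : Assign} (H G : ConflictGraph F α) : Prop :=
  Subconflict H G ∧
  ∀ l ∈ H.V, (∃ e ∈ H.E, e.2 = l) → ∀ p ∈ H.leaves, ¬ G.Reach l p

def StrictSub {F : CNF} {α : Assign} (H G : ConflictGraph F α) : Prop :=
  Subconflict H G ∧ (H.V ≠ G.V ∨ H.E ≠ G.E)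

/-- A series-parallel decomposition of a conflict graph `G`:
`H i 0 = H_i` for `i ≤ k` and `H i j = H_{i,j}` for `j ≤ m i`. -/
structure SPDecomp {F : CNF} {α : Assign} (G : ConflictGraph F α) where
  k : ℕ
  hk : 1 ≤ k
  m : ℕ → ℕ
  hm : ∀ i < k, 1 ≤ m i
  H : ℕ → ℕ → ConflictGraph F α
  base_V : (H 0 0).V = {posLit G.x, negLit G.x}
  base_E : (H 0 0).E = ∅
  chain : ∀ i < k, ∀ j < m i, StrictSub (H i j) (H i (j + 1))
  proper : ∀ i < k, ∀ j ≤ m i, ProperSub (H i j) G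
  link : ∀ i, i + 1 < k → H i (m i) = H (i + 1) 0
  top : H (k - 1) (m (k - 1)) = G

/-- The learnable clauses of a series-parallel decomposition. -/
def SPDecomp.learnable {F : CNF} {α : Assign} {G : ConflictGraph F α}
    (D : SPDecomp G) : Set Clause :=
  {C | ∃ j, 1 ≤ j ∧ j ≤ D.m 0 ∧ C = (D.H 0 j).conflictClause} ∪
  {C | ∃ i j l, 0 < i ∧ i < D.k ∧ 1 ≤ j ∧ j ≤ D.m i ∧
      l ∈ (D.H i 0).leaves ∧ l ∉ (D.H i j).leaves ∧
      C = (D.H i j).inducedClause l}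

def SPDecomp.isSeries {F : CNF} {α : Assign} {G : ConflictGraph F α}
    (D : SPDecomp G) : Prop := D.k = 1

/-- Executions of the basic DLL algorithm returning UNSAT;
the `ℕ` counts the recursive calls made. -/
inductive DLLUnsat (F : CNF) : Assign → ℕ → Prop
  | conflict (α) (h : CNFFalse F α) : DLLUnsat F α 0
  | branch (α) (x : Var) (ε : Bool) (s0 s1 : ℕ)
      (hnot0 : ¬ CNFFalse F α) (hnot1 : ¬ CNFTrue F α) (hx : α x = none)
      (h0 : DLLUnsat F (α.set x ε) s0) (h1 : DLLUnsat F (α.set x (!ε)) s1) :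
      DLLUnsat F α (s0 + s1 + 2)

/-- Executions of the (non-greedy) DLL-L-UP algorithm returning UNSAT:
`DLLLUP F α s F'` means the call on `(F, α)` returns `(F', UNSAT)` after `s`
recursive calls. -/
inductive DLLLUP : CNF → Assign → ℕ → CNF → Prop
  | conflict (F : CNF) (α : Assign) (G : ConflictGraph F α) (D : SPDecomp G)
      (S : Set Clause) (hS : S ⊆ D.learnable) : DLLLUP F α 0 (F ∪ S)
  | branch (F : CNF) (α : Assign) (x : Var) (ε : Bool) (s0 s1 : ℕ) (F1 F2 : CNF)
      (hx : α x = none)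
      (h0 : DLLLUP F (α.set x ε) s0 F1) (h1 : DLLLUP F1 (α.set x (!ε)) s1 F2) :
      DLLLUP F α (s0 + s1 + 2) F2

/-- Executions of DLL-Learn returning UNSAT: `DLLLearn F α s F' C` means the
call on `(F, α)` returns `(F', UNSAT)` with tagged clause `C` after `s`
recursive calls. -/
inductive DLLLearn : CNF → Assign → ℕ → CNF → Clause → Prop
  | base (F : CNF) (α : Assign) (C : Clause) (hC : C ∈ F) (hf : falsifies α C) :
      DLLLearn F α 0 F C
  | branch (F : CNF) (α : Assign) (x : Var) (ε : Bool) (s0 s1 : ℕ)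
      (F1 F2 : CNF) (C0 C1 : Clause) (hx : α x = none)
      (h0 : DLLLearn F (α.set x ε) s0 F1 C0)
      (h1 : DLLLearn F1 (α.set x (!ε)) s1 F2 C1) :
      DLLLearn F α (s0 + s1 + 2)
        (F2 ∪ {C0.erase (x, !ε) ∪ C1.erase (x, ε)})
        (C0.erase (x, !ε) ∪ C1.erase (x, ε))

/-- Trees of resolution and weakening inferences. -/
inductive WTree where
  | leaf (C : Clause)
  | res (C : Clause) (x : Var) (t0 t1 : WTree)
  | weak (C : Clause) (t : WTree)

namespace WTree

def conc : WTree → Clause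
  | leaf C => C
  | res C _ _ _ => C
  | weak C _ => C

def size : WTree → ℕ
  | leaf _ => 1
  | res _ _ t0 t1 => t0.size + t1.size + 1
  | weak _ t => t.size + 1

def allClauses : WTree → Set Clause
  | leaf C => {C}
  | res C _ t0 t1 => {C} ∪ t0.allClauses ∪ t1.allClauses
  | weak C t => {C} ∪ t.allClauses

def leafClauses : WTree → Set Clause
  | leaf C => {C}
  | res _ _ t0 t1 => t0.leafClauses ∪ t1.leafClauses
  | weak _ t => t.leafClauses

end WTree

/-- Resolution trees with lemmas and weakening, all lemmas of size `≤ k`. -/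
def IsRTLW (F : CNF) (k : ℕ) : WTree → Set Clause → Prop
  | .leaf C, avail => C ∈ F ∨ (C ∈ avail ∧ C.card ≤ k)
  | .res C x t0 t1, avail => IsRTLW F k t0 avail ∧ IsRTLW F k t1 (avail ∪ t0.allClauses) ∧
      posLit x ∈ t0.conc ∧ negLit x ∈ t1.conc ∧ C = Resolvent t0.conc t1.conc x
  | .weak C t, avail => IsRTLW F k t avail ∧ t.conc ⊆ C

def phpVar (n i j : ℕ) : Var := i * n + j

/-- The clauses of the functional pigeonhole principle `FPHP_n`. -/
def FPHP (n : ℕ) : CNF :=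
  {C | ∃ i, 1 ≤ i ∧ i ≤ n + 1 ∧
      C = (Finset.Icc 1 n).image (fun j => posLit (phpVar n i j))} ∪
  {C | ∃ i j k, 1 ≤ i ∧ i < j ∧ j ≤ n + 1 ∧ 1 ≤ k ∧ k ≤ n ∧
      C = {negLit (phpVar n i k), negLit (phpVar n j k)}} ∪
  {C | ∃ i j k, 1 ≤ i ∧ i ≤ n + 1 ∧ 1 ≤ j ∧ j < k ∧ k ≤ n ∧
      C = {negLit (phpVar n i j), negLit (phpVar n i k)}}

/-- The variable extension `VE(F)` with extension variables `q` and `P`. -/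
def VE (F : CNF) (q : Var) (P : Finset Var) : CNF :=
  F ∪ {D | ∃ C ∈ F, ∃ l ∈ C, D = {posLit q, Lit.neg l}} ∪ {P.image posLit}


/-!
Unfold the lemma leaves of the refutation into their derivations, stopping at the first lemma
that neither contains an axiom nor is a tautology on a pigeonhole variable. This yields such a
clause `D` with at most `k ≤ n/2` literals (possibly `D = ∅`) and a tree derivation of it by
resolution and weakening from axioms and tautologies, of size at most that of the refutation.

That derivation is bounded below by an adversary walking down from its root, starting with the
assignment that falsifies `D`: it matches at most `k` pigeons, leaves every pigeon at least
`n - k` open holes, and its true variables form a partial matching. The potential — the least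
product of `(open holes of i) - d` over `d` free pigeons `i` — never exceeds the size of the
current subtree: a query matching a free pigeon to an open hole splits the potential between
the two children, every other query can be answered without lowering it, and at a leaf some free
pigeon has no open hole left. With `d = n/8 + 1` the initial potential is at least
`(n/8)^(n/8)`.
-/

open Finset

section MinProd

variable {ι : Type*} {F : Finset ι} {d : ℕ} {w : ι → ℕ}

/-- `sInf ∅ = 0`: the minimum is `0` when `F` has fewer than `d` elements. -/
def minProd (F : Finset ι) (d : ℕ) (w : ι → ℕ) : ℕ :=
  sInf {p | ∃ I ⊆ F, I.card = d ∧ ∏ i ∈ I, w i = p}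

lemma minProd_le {I : Finset ι} (hI : I ⊆ F) (hcard : I.card = d) :
    minProd F d w ≤ ∏ i ∈ I, w i :=
  Nat.sInf_le ⟨I, hI, hcard, rfl⟩

lemma exists_prod_eq_minProd (hd : d ≤ F.card) :
    ∃ I ⊆ F, I.card = d ∧ ∏ i ∈ I, w i = minProd F d w := by
  obtain ⟨I, hI, hcard⟩ := exists_subset_card_eq hd
  exact Nat.sInf_mem (s := {p | ∃ I ⊆ F, I.card = d ∧ ∏ i ∈ I, w i = p}) ⟨_, I, hI, hcard, rfl⟩

lemma minProd_of_card_lt (hd : F.card < d) : minProd F d w = 0 := by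
  refine Nat.sInf_eq_zero.mpr (Or.inr (Set.eq_empty_of_forall_notMem ?_))
  rintro p ⟨I, hI, rfl, -⟩
  exact (card_le_card hI).not_gt hd

lemma minProd_mono {w' : ι → ℕ} (hw : ∀ i ∈ F, w i ≤ w' i) :
    minProd F d w ≤ minProd F d w' := by
  rcases lt_or_ge F.card d with hd | hd
  · rw [minProd_of_card_lt hd]; exact Nat.zero_le _
  obtain ⟨I, hI, hcard, hprod⟩ := exists_prod_eq_minProd (w := w') hd
  calc minProd F d w ≤ ∏ i ∈ I, w i := minProd_le hI hcard
    _ ≤ ∏ i ∈ I, w' i := prod_le_prod' fun i hi => hw i (hI hi)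
    _ = minProd F d w' := hprod

lemma minProd_zero_le_one : minProd F 0 w ≤ 1 :=
  (minProd_le (empty_subset F) card_empty).trans_eq prod_empty

lemma minProd_le_one {i : ι} (hi : i ∈ F) (hwi : w i = 0) : minProd F d w ≤ 1 := by
  rcases Nat.eq_zero_or_pos d with rfl | hd0
  · exact minProd_zero_le_one
  rcases lt_or_ge F.card d with hd | hd
  · rw [minProd_of_card_lt hd]; exact zero_le_one
  obtain ⟨I, hiI, hI, hcard⟩ :=
    exists_subsuperset_card_eq (singleton_subset_iff.mpr hi) (by rwa [card_singleton]) hd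
  calc minProd F d w ≤ ∏ j ∈ I, w j := minProd_le hI hcard
    _ = 0 := prod_eq_zero (singleton_subset_iff.mp hiI) hwi
    _ ≤ 1 := zero_le_one

lemma pow_le_minProd {b : ℕ} (hd : d ≤ F.card) (hw : ∀ i ∈ F, b ≤ w i) :
    b ^ d ≤ minProd F d w := by
  obtain ⟨I, hI, rfl, hprod⟩ := exists_prod_eq_minProd (w := w) hd
  exact hprod ▸ pow_card_le_prod I w b fun i hi => hw i (hI hi)

/-- If a minimiser `I₀` for `w₀` contains `i`, compare `w` on `insert i J₀`, for a minimiser `J₀`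
over `F.erase i`, with `w₀ i` times the product of `w₀` over `I₀.erase i`. -/
lemma minProd_le_add [DecidableEq ι] {w₀ : ι → ℕ} {i : ι} (hi : i ∈ F)
    (hw : ∀ j ∈ F, j ≠ i → w j ≤ w₀ j) (hwi : w i ≤ w₀ i + 1) :
    minProd F (d + 1) w ≤ minProd F (d + 1) w₀ + minProd (F.erase i) d w := by
  rcases lt_or_ge F.card (d + 1) with hd | hd
  · rw [minProd_of_card_lt hd]; exact Nat.zero_le _
  obtain ⟨I₀, hI₀, hcard₀, hprod₀⟩ := exists_prod_eq_minProd (w := w₀) hd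
  by_cases hiI₀ : i ∈ I₀
  swap
  · calc minProd F (d + 1) w ≤ ∏ j ∈ I₀, w j := minProd_le hI₀ hcard₀
      _ ≤ ∏ j ∈ I₀, w₀ j :=
          prod_le_prod' fun j hj => hw j (hI₀ hj) fun h => hiI₀ (h ▸ hj)
      _ ≤ _ := hprod₀ ▸ le_self_add
  have hrest : I₀.erase i ⊆ F.erase i := erase_subset_erase i hI₀
  have hcard_rest : (I₀.erase i).card = d := by rw [card_erase_of_mem hiI₀, hcard₀]; rfl
  obtain ⟨J₀, hJ₀, hcardJ, hprodJ⟩ :=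
    exists_prod_eq_minProd (w := w) (hcard_rest ▸ card_le_card hrest)
  have hiJ₀ : i ∉ J₀ := fun h => (mem_erase.mp (hJ₀ h)).1 rfl
  set V := minProd (F.erase i) d w
  have hV : V ≤ ∏ j ∈ I₀.erase i, w₀ j :=
    (minProd_le hrest hcard_rest).trans <| prod_le_prod' fun j hj =>
      hw j (hI₀ (mem_of_mem_erase hj)) (ne_of_mem_erase hj)
  calc minProd F (d + 1) w ≤ ∏ j ∈ insert i J₀, w j :=
        minProd_le (insert_subset hi (hJ₀.trans (erase_subset i F)))
          (by rw [card_insert_of_notMem hiJ₀, hcardJ])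
    _ = w i * V := by rw [prod_insert hiJ₀, hprodJ]
    _ ≤ (w₀ i + 1) * V := Nat.mul_le_mul_right V hwi
    _ = w₀ i * V + V := by ring
    _ ≤ w₀ i * ∏ j ∈ I₀.erase i, w₀ j + V := by gcongr
    _ = minProd F (d + 1) w₀ + V := by rw [mul_prod_erase I₀ w₀ hiI₀, hprod₀]

end MinProd

section PigeonVariables

variable {n i j i' j' : ℕ}

def phpPigeon (n v : ℕ) : ℕ := (v - 1) / n

def phpHole (n v : ℕ) : ℕ := (v - 1) % n + 1

lemma phpVar_sub_one (hj : j ∈ Icc 1 n) : phpVar n i j - 1 = n * i + (j - 1) := by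
  rw [phpVar, Nat.mul_comm i n]
  exact Nat.add_sub_assoc (mem_Icc.mp hj).1 _

lemma phpPigeon_phpVar (hj : j ∈ Icc 1 n) : phpPigeon n (phpVar n i j) = i := by
  have hj' := mem_Icc.mp hj
  rw [phpPigeon, phpVar_sub_one hj, Nat.mul_add_div (show 0 < n by omega),
    Nat.div_eq_of_lt (show j - 1 < n by omega), add_zero]

lemma phpHole_phpVar (hj : j ∈ Icc 1 n) : phpHole n (phpVar n i j) = j := by
  have hj' := mem_Icc.mp hj
  rw [phpHole, phpVar_sub_one hj, Nat.mul_add_mod, Nat.mod_eq_of_lt (show j - 1 < n by omega)]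
  omega

lemma phpVar_inj (hj : j ∈ Icc 1 n) (hj' : j' ∈ Icc 1 n)
    (h : phpVar n i j = phpVar n i' j') : i = i' ∧ j = j' :=
  ⟨by rw [← phpPigeon_phpVar (i := i) hj, h, phpPigeon_phpVar hj'],
    by rw [← phpHole_phpVar (i := i) hj, h, phpHole_phpVar hj']⟩

end PigeonVariables

namespace Assign

variable {α : Assign} {x v : Var} {b : Bool}

lemma set_apply_self : α.set x b x = some b := if_pos rfl

lemma set_apply_of_ne (h : v ≠ x) : α.set x b v = α v := if_neg h

lemma set_of_eq (h : α x = some b) : α.set x b = α := by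
  funext v
  by_cases hv : v = x
  · rw [hv, set_apply_self, h]
  · exact set_apply_of_ne hv

lemma set_false_eq_some_true (hx : α x ≠ some true) :
    α.set x false v = some true ↔ α v = some true := by
  by_cases hv : v = x
  · subst hv; simp [set_apply_self, hx]
  · rw [set_apply_of_ne hv]

lemma eq_some_true_of_set_false (h : α.set x false v = some true) : α v = some true := by
  by_cases hv : v = x
  · simp [hv, set_apply_self] at h
  · rwa [set_apply_of_ne hv] at h

lemma set_true_eq_some_true : α.set x true v = some true ↔ α v = some true ∨ v = x := by
  by_cases hv : v = x
  · simp [hv, set_apply_self]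
  · simp [set_apply_of_ne hv, hv]

lemma set_eq_none : α.set x b v = none ↔ α v = none ∧ v ≠ x := by
  by_cases hv : v = x
  · simp [hv, set_apply_self]
  · simp [set_apply_of_ne hv, hv]

end Assign

def freePigeons (n : ℕ) (α : Assign) : Finset ℕ :=
  (Icc 1 (n + 1)).filter fun i => ∀ j ∈ Icc 1 n, α (phpVar n i j) ≠ some true

def openHoles (n : ℕ) (α : Assign) (i : ℕ) : Finset ℕ :=
  (Icc 1 n).filter fun j =>
    α (phpVar n i j) = none ∧ ∀ i' ∈ Icc 1 (n + 1), α (phpVar n i' j) ≠ some true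

def IsMatching (n : ℕ) (α : Assign) : Prop :=
  ∀ i ∈ Icc 1 (n + 1), ∀ j ∈ Icc 1 n, ∀ i' ∈ Icc 1 (n + 1), ∀ j' ∈ Icc 1 n,
    α (phpVar n i j) = some true → α (phpVar n i' j') = some true → (i = i' ↔ j = j')

def potential (n : ℕ) (α : Assign) (d : ℕ) : ℕ :=
  minProd (freePigeons n α) d fun i => (openHoles n α i).card - d

section AdversaryState

variable {n i j d : ℕ} {α : Assign} {x : Var}

lemma mem_freePigeons :
    i ∈ freePigeons n α ↔ i ∈ Icc 1 (n + 1) ∧ ∀ j ∈ Icc 1 n, α (phpVar n i j) ≠ some true := by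
  simp only [freePigeons, mem_filter]

lemma mem_openHoles : j ∈ openHoles n α i ↔ j ∈ Icc 1 n ∧
    α (phpVar n i j) = none ∧ ∀ i' ∈ Icc 1 (n + 1), α (phpVar n i' j) ≠ some true := by
  simp only [openHoles, mem_filter]

lemma freePigeons_set_false (hx : α x ≠ some true) :
    freePigeons n (α.set x false) = freePigeons n α := by
  ext i
  simp only [freePigeons, mem_filter, ne_eq, Assign.set_false_eq_some_true hx]

lemma openHoles_set_false (hx : α x ≠ some true) :
    openHoles n (α.set x false) i = (openHoles n α i).filter (phpVar n i · ≠ x) := by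
  ext j
  simp only [openHoles, mem_filter, ne_eq, Assign.set_false_eq_some_true hx,
    Assign.set_eq_none]
  tauto

lemma freePigeons_set_true (hj : j ∈ Icc 1 n) :
    freePigeons n (α.set (phpVar n i j) true) = (freePigeons n α).erase i := by
  ext i'
  simp only [freePigeons, mem_erase, mem_filter, ne_eq, Assign.set_true_eq_some_true, not_or]
  constructor
  · rintro ⟨hi', h⟩
    exact ⟨fun e => (h j hj).2 (e ▸ rfl), hi', fun j' hj' => (h j' hj').1⟩
  · rintro ⟨hne, hi', h⟩
    exact ⟨hi', fun j' hj' => ⟨h j' hj', fun e => hne (phpVar_inj hj' hj e).1⟩⟩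

lemma erase_openHoles_subset_set_true {i' : ℕ} (hj : j ∈ Icc 1 n) (hne : i' ≠ i) :
    (openHoles n α i').erase j ⊆ openHoles n (α.set (phpVar n i j) true) i' := by
  intro j' hj'
  simp only [openHoles, mem_erase, mem_filter, ne_eq, Assign.set_true_eq_some_true,
    Assign.set_eq_none, not_or] at hj' ⊢
  obtain ⟨hjj', hj'I, hnone, hfree⟩ := hj'
  exact ⟨hj'I, ⟨hnone, fun e => hne (phpVar_inj hj'I hj e).1⟩,
    fun a ha => ⟨hfree a ha, fun e => hjj' (phpVar_inj hj'I hj e).2⟩⟩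

lemma IsMatching.set_false (h : IsMatching n α) : IsMatching n (α.set x false) :=
  fun _ hi _ hj _ hi' _ hj' ht ht' =>
    h _ hi _ hj _ hi' _ hj' (Assign.eq_some_true_of_set_false ht)
      (Assign.eq_some_true_of_set_false ht')

lemma IsMatching.set_true (h : IsMatching n α) (hi : i ∈ freePigeons n α)
    (hj : j ∈ openHoles n α i) : IsMatching n (α.set (phpVar n i j) true) := by
  obtain ⟨-, hfreeI⟩ := mem_freePigeons.mp hi
  obtain ⟨hjI, -, hfreeJ⟩ := mem_openHoles.mp hj
  have hnew : ∀ a ∈ Icc 1 (n + 1), ∀ b ∈ Icc 1 n, α (phpVar n a b) = some true →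
      (i = a ↔ j = b) := fun a ha b hb ht => by
    constructor
    · rintro rfl; exact absurd ht (hfreeI b hb)
    · rintro rfl; exact absurd ht (hfreeJ a ha)
  intro a ha b hb a' ha' b' hb' ht ht'
  rw [Assign.set_true_eq_some_true] at ht ht'
  rcases ht with ht | ht <;> rcases ht' with ht' | ht'
  · exact h a ha b hb a' ha' b' hb' ht ht'
  · obtain ⟨rfl, rfl⟩ := phpVar_inj hb' hjI ht'
    rw [eq_comm, @eq_comm _ b]
    exact hnew a ha b hb ht
  · obtain ⟨rfl, rfl⟩ := phpVar_inj hb hjI ht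
    exact hnew a' ha' b' hb' ht'
  · obtain ⟨rfl, rfl⟩ := phpVar_inj hb hjI ht
    obtain ⟨rfl, rfl⟩ := phpVar_inj hb' hjI ht'
    simp

lemma potential_le_set_false (hx : α x ≠ some true)
    (hxfree : ∀ i ∈ freePigeons n α, ∀ j ∈ openHoles n α i, phpVar n i j ≠ x) :
    potential n α d ≤ potential n (α.set x false) d := by
  rw [potential, potential, freePigeons_set_false hx]
  refine minProd_mono fun i hi => ?_
  rw [openHoles_set_false hx, filter_true_of_mem (hxfree i hi)]

lemma potential_succ_le_add (hi : i ∈ freePigeons n α) (hj : j ∈ openHoles n α i) :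
    potential n α (d + 1) ≤ potential n (α.set (phpVar n i j) false) (d + 1) +
      potential n (α.set (phpVar n i j) true) d := by
  obtain ⟨hjI, hnone, -⟩ := mem_openHoles.mp hj
  have hx : α (phpVar n i j) ≠ some true := by simp [hnone]
  have hsame : ∀ i' ≠ i, openHoles n (α.set (phpVar n i j) false) i' = openHoles n α i' :=
    fun i' hne => by
      rw [openHoles_set_false hx]
      exact filter_true_of_mem fun j' hj' e => hne (phpVar_inj (mem_openHoles.mp hj').1 hjI e).1
  have hone : (openHoles n α i).erase j ⊆ openHoles n (α.set (phpVar n i j) false) i := by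
    rw [openHoles_set_false hx]
    intro j' hj'
    exact mem_filter.mpr ⟨mem_of_mem_erase hj', fun e => ne_of_mem_erase hj'
      (phpVar_inj (mem_openHoles.mp (mem_of_mem_erase hj')).1 hjI e).2⟩
  rw [potential, potential, potential, freePigeons_set_false hx, freePigeons_set_true hjI]
  refine (minProd_le_add hi (fun i' _ hne => by rw [hsame i' hne]) ?_).trans (Nat.add_le_add_left
    (minProd_mono fun i' hi' => ?_) _)
  · have := (card_le_card hone).trans' pred_card_le_card_erase
    omega
  · have := (card_le_card (erase_openHoles_subset_set_true (α := α) hjI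
      (ne_of_mem_erase hi'))).trans' pred_card_le_card_erase
    omega

end AdversaryState

def IsPHPVar (n : ℕ) (v : Var) : Prop :=
  ∃ i ∈ Icc 1 (n + 1), ∃ j ∈ Icc 1 n, v = phpVar n i j

/-- `α` falsifies `C`, except possibly for positive literals of variables outside the pigeonhole
formula: a clause may contain such a variable with both signs. -/
def AlmostFalsifies (n : ℕ) (α : Assign) (C : Clause) : Prop :=
  ∀ l ∈ C, α l.1 = some (!l.2) ∨ (l.2 = true ∧ ¬ IsPHPVar n l.1)

def AxiomOrTaut (n : ℕ) (C : Clause) : Prop :=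
  (∃ A ∈ FPHP n, A ⊆ C) ∨ ∃ v, IsPHPVar n v ∧ posLit v ∈ C ∧ negLit v ∈ C

def WTree.IsDerivFrom (G : Clause → Prop) : WTree → Prop
  | .leaf C => G C
  | .res C x t0 t1 => C = Resolvent t0.conc t1.conc x ∧ t0.IsDerivFrom G ∧ t1.IsDerivFrom G
  | .weak C t => t.conc ⊆ C ∧ t.IsDerivFrom G

lemma WTree.one_le_size (t : WTree) : 1 ≤ t.size := by
  cases t <;> simp [WTree.size]

namespace AlmostFalsifies

variable {n : ℕ} {α : Assign} {C c : Clause}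

lemma mono (h : AlmostFalsifies n α C) (hc : c ⊆ C) : AlmostFalsifies n α c :=
  fun l hl => h l (hc hl)

lemma set {x : Var} {b : Bool} (h : AlmostFalsifies n α C) (hx : α x ≠ some (!b))
    (hc : c ⊆ insert (x, !b) C) : AlmostFalsifies n (α.set x b) c := by
  rintro ⟨v, s⟩ hl
  rcases mem_insert.mp (hc hl) with hl' | hl'
  · obtain ⟨rfl, rfl⟩ := Prod.mk.inj hl'
    simp [Assign.set_apply_self]
  rcases h _ hl' with hv | hv
  · by_cases hvx : v = x
    · subst hvx
      cases s <;> cases b <;> simp_all [Assign.set_apply_self]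
    · exact Or.inl (by rwa [Assign.set_apply_of_ne hvx])
  · exact Or.inr hv

lemma eq_some_true {v : Var} (h : AlmostFalsifies n α C) (hv : negLit v ∈ C) :
    α v = some true := by
  simpa [negLit] using h _ hv

lemma eq_some_false {v : Var} (h : AlmostFalsifies n α C) (hv : posLit v ∈ C)
    (hphp : IsPHPVar n v) : α v = some false := by
  simpa [posLit, hphp] using h _ hv

end AlmostFalsifies

lemma exists_dead_pigeon {n : ℕ} {α : Assign} {C : Clause} (hC : AxiomOrTaut n C)
    (hF : AlmostFalsifies n α C) (hM : IsMatching n α) :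
    ∃ i ∈ freePigeons n α, openHoles n α i = ∅ := by
  rcases hC with ⟨A, ((⟨i, hi1, hi2, rfl⟩ | ⟨i, i', k, hi, hii', hi', hk, hk', rfl⟩) |
      ⟨i, j, j', hi, hi', hj, hjj', hj', rfl⟩), hAC⟩ | ⟨v, hv, hpos, hneg⟩
  · have hi : i ∈ Icc 1 (n + 1) := mem_Icc.mpr ⟨hi1, hi2⟩
    have hfalse : ∀ j ∈ Icc 1 n, α (phpVar n i j) = some false := fun j hj =>
      hF.eq_some_false (hAC (mem_image_of_mem _ hj)) ⟨i, hi, j, hj, rfl⟩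
    refine ⟨i, mem_freePigeons.mpr ⟨hi, fun j hj => by simp [hfalse j hj]⟩,
      eq_empty_of_forall_notMem fun j hj => ?_⟩
    obtain ⟨hj, hnone, -⟩ := mem_openHoles.mp hj
    simp [hfalse j hj] at hnone
  · have := hM i (mem_Icc.mpr ⟨hi, by omega⟩) k (mem_Icc.mpr ⟨hk, hk'⟩)
      i' (mem_Icc.mpr ⟨by omega, hi'⟩) k (mem_Icc.mpr ⟨hk, hk'⟩)
      (hF.eq_some_true (hAC (by simp))) (hF.eq_some_true (hAC (by simp)))
    omega
  · have := hM i (mem_Icc.mpr ⟨hi, hi'⟩) j (mem_Icc.mpr ⟨hj, by omega⟩)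
      i (mem_Icc.mpr ⟨hi, hi'⟩) j' (mem_Icc.mpr ⟨by omega, hj'⟩)
      (hF.eq_some_true (hAC (by simp))) (hF.eq_some_true (hAC (by simp)))
    omega
  · have := (hF.eq_some_false hpos hv).symm.trans (hF.eq_some_true hneg)
    simp at this

theorem potential_le_size {n : ℕ} {s : WTree} (hs : s.IsDerivFrom (AxiomOrTaut n))
    {α : Assign} {d : ℕ} (hM : IsMatching n α) (hF : AlmostFalsifies n α s.conc) :
    potential n α d ≤ s.size := by
  induction s generalizing α d with
  | leaf C =>
    obtain ⟨i, hi, hU⟩ := exists_dead_pigeon hs hF hM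
    exact minProd_le_one hi (by simp [hU]) |>.trans (WTree.one_le_size _)
  | weak C s ih =>
    exact (ih hs.2 hM (hF.mono hs.1)).trans (Nat.le_succ _)
  | res C x t0 t1 ih0 ih1 =>
    obtain ⟨rfl, h0, h1⟩ := hs
    have hsize : t0.size + t1.size ≤ (WTree.res (Resolvent t0.conc t1.conc x) x t0 t1).size :=
      Nat.le_succ _
    have hsub0 : t0.conc ⊆ insert (posLit x) (Resolvent t0.conc t1.conc x) :=
      subset_insert_iff.mpr subset_union_left
    have hsub1 : t1.conc ⊆ insert (negLit x) (Resolvent t0.conc t1.conc x) :=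
      subset_insert_iff.mpr subset_union_right
    rcases d with _ | d
    · exact minProd_zero_le_one.trans (WTree.one_le_size _)
    by_cases hx1 : α x = some true
    · have hF1 := hF.set (b := true) (by simp [hx1]) hsub1
      rw [Assign.set_of_eq hx1] at hF1
      exact (ih1 h1 hM hF1).trans (le_add_self.trans hsize)
    by_cases hsplit : ∃ i ∈ freePigeons n α, ∃ j ∈ openHoles n α i, phpVar n i j = x
    · obtain ⟨i, hi, j, hj, rfl⟩ := hsplit
      have hnone := (mem_openHoles.mp hj).2.1
      calc potential n α (d + 1)
          ≤ potential n (α.set (phpVar n i j) false) (d + 1) +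
              potential n (α.set (phpVar n i j) true) d := potential_succ_le_add hi hj
        _ ≤ t0.size + t1.size := add_le_add
            (ih0 h0 hM.set_false (hF.set (by simp [hnone]) hsub0))
            (ih1 h1 (hM.set_true hi hj) (hF.set (by simp [hnone]) hsub1))
        _ ≤ _ := hsize
    push Not at hsplit
    calc potential n α (d + 1) ≤ potential n (α.set x false) (d + 1) :=
          potential_le_set_false hx1 hsplit
      _ ≤ t0.size := ih0 h0 hM.set_false (hF.set (by simpa using hx1) hsub0)
      _ ≤ _ := le_self_add.trans hsize

lemma WTree.conc_mem_allClauses (t : WTree) : t.conc ∈ t.allClauses := by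
  cases t <;> simp [WTree.conc, WTree.allClauses]

def DerivableWithin (G : Clause → Prop) (N : ℕ) (D : Clause) : Prop :=
  ∃ s : WTree, s.IsDerivFrom G ∧ s.conc = D ∧ s.size ≤ N

lemma DerivableWithin.mono {G : Clause → Prop} {N M : ℕ} {D : Clause}
    (h : DerivableWithin G N D) (hNM : N ≤ M) : DerivableWithin G M D :=
  let ⟨s, hs, hD, hN⟩ := h
  ⟨s, hs, hD, hN.trans hNM⟩

section Unfolding

variable {F : CNF} {G : Clause → Prop} {k N : ℕ}

/-- Unfold lemma leaves into their derivations, stopping at the first lemma outside `G`. -/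
theorem IsRTLW.derivable_or_exists_lemma (hFG : ∀ C ∈ F, G C) {t : WTree} {avail : Set Clause}
    (ht : IsRTLW F k t avail) (hN : t.size ≤ N)
    (havail : ∀ D ∈ avail, D.card ≤ k → ¬ G D → DerivableWithin G N D) :
    (∀ D ∈ t.allClauses, DerivableWithin G t.size D) ∨
      ∃ D, D.card ≤ k ∧ ¬ G D ∧ DerivableWithin G N D := by
  induction t generalizing avail with
  | leaf C =>
    by_cases hC : G C
    · refine Or.inl fun D hD => ?_
      obtain rfl : D = C := hD
      exact ⟨.leaf D, hC, rfl, le_rfl⟩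
    rcases ht with hCF | ⟨hCa, hCk⟩
    · exact absurd (hFG C hCF) hC
    · exact Or.inr ⟨C, hCk, hC, havail C hCa hCk hC⟩
  | res C x t0 t1 ih0 ih1 =>
    obtain ⟨h0, h1, -, -, rfl⟩ := ht
    have hsize : (WTree.res (Resolvent t0.conc t1.conc x) x t0 t1).size = t0.size + t1.size + 1 :=
      rfl
    rcases ih0 h0 (by omega) havail with H0 | H0
    swap; · exact Or.inr H0
    have havail' : ∀ D ∈ avail ∪ t0.allClauses, D.card ≤ k → ¬ G D → DerivableWithin G N D :=
      fun D hD hk hG => hD.elim (havail D · hk hG) fun hD => (H0 D hD).mono (by omega)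
    rcases ih1 h1 (by omega) havail' with H1 | H1
    swap; · exact Or.inr H1
    refine Or.inl fun D hD => ?_
    rcases hD with (hD | hD) | hD
    · obtain ⟨s0, hs0, hc0, hn0⟩ := H0 _ t0.conc_mem_allClauses
      obtain ⟨s1, hs1, hc1, hn1⟩ := H1 _ t1.conc_mem_allClauses
      obtain rfl : D = Resolvent t0.conc t1.conc x := hD
      refine ⟨.res _ x s0 s1, ⟨by rw [hc0, hc1]; rfl, hs0, hs1⟩, rfl, ?_⟩
      simp only [WTree.size]; omega
    · exact (H0 D hD).mono (by omega)
    · exact (H1 D hD).mono (by omega)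
  | weak C t ih =>
    obtain ⟨ht, hsub⟩ := ht
    rcases ih ht (by simp only [WTree.size] at hN; omega) havail with H | H
    swap; · exact Or.inr H
    refine Or.inl fun D hD => ?_
    rcases hD with hD | hD
    · obtain ⟨s, hs, hc, hn⟩ := H _ t.conc_mem_allClauses
      obtain rfl : D = C := hD
      exact ⟨.weak D s, ⟨hc ▸ hsub, hs⟩, rfl, by simp only [WTree.size]; omega⟩
    · exact (H D hD).mono (by simp only [WTree.size]; omega)

theorem IsRTLW.exists_lemma (hFG : ∀ C ∈ F, G C) {t : WTree} (ht : IsRTLW F k t ∅)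
    (hG : ¬ G t.conc) (hk : t.conc.card ≤ k) :
    ∃ D, D.card ≤ k ∧ ¬ G D ∧ DerivableWithin G t.size D := by
  rcases ht.derivable_or_exists_lemma hFG le_rfl (by simp) with H | H
  · exact ⟨t.conc, hk, hG, H _ t.conc_mem_allClauses⟩
  · exact H

end Unfolding

section FalsifyingAssign

variable {n : ℕ} {C : Clause}

def falsifyingAssign (C : Clause) : Assign := fun v =>
  if negLit v ∈ C then some true else if posLit v ∈ C then some false else none

lemma falsifyingAssign_eq_some_true {v : Var} :
    falsifyingAssign C v = some true ↔ negLit v ∈ C := by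
  unfold falsifyingAssign
  split_ifs <;> simp_all

lemma mem_image_fst_of_falsifyingAssign_ne_none {v : Var} (h : falsifyingAssign C v ≠ none) :
    v ∈ C.image Prod.fst := by
  unfold falsifyingAssign at h
  split_ifs at h with hneg hpos
  · exact mem_image_of_mem Prod.fst hneg
  · exact mem_image_of_mem Prod.fst hpos
  · exact absurd rfl h

lemma almostFalsifies_falsifyingAssign (hC : ¬ AxiomOrTaut n C) :
    AlmostFalsifies n (falsifyingAssign C) C := by
  rintro ⟨v, (_ | _)⟩ hl
  · exact Or.inl (falsifyingAssign_eq_some_true.mpr hl)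
  by_cases hneg : negLit v ∈ C
  · exact Or.inr ⟨rfl, fun hv => hC (Or.inr ⟨v, hv, hl, hneg⟩)⟩
  · exact Or.inl (by simp [falsifyingAssign, hneg, posLit, hl])

lemma pair_mem_FPHP_of_pigeon {i j j' : ℕ} (hi : i ∈ Icc 1 (n + 1)) (hj : j ∈ Icc 1 n)
    (hj' : j' ∈ Icc 1 n) (hne : j ≠ j') :
    {negLit (phpVar n i j), negLit (phpVar n i j')} ∈ FPHP n := by
  rw [mem_Icc] at hi hj hj'
  rcases hne.lt_or_gt with h | h
  · exact Or.inr ⟨i, j, j', hi.1, hi.2, hj.1, h, hj'.2, rfl⟩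
  · exact Or.inr ⟨i, j', j, hi.1, hi.2, hj'.1, h, hj.2, pair_comm _ _⟩

lemma pair_mem_FPHP_of_hole {i i' j : ℕ} (hi : i ∈ Icc 1 (n + 1)) (hi' : i' ∈ Icc 1 (n + 1))
    (hj : j ∈ Icc 1 n) (hne : i ≠ i') :
    {negLit (phpVar n i j), negLit (phpVar n i' j)} ∈ FPHP n := by
  rw [mem_Icc] at hi hi' hj
  rcases hne.lt_or_gt with h | h
  · exact Or.inl (Or.inr ⟨i, i', j, hi.1, h, hi'.2, hj.1, hj.2, rfl⟩)
  · exact Or.inl (Or.inr ⟨i', i, j, hi'.1, h, hi.2, hj.1, hj.2, pair_comm _ _⟩)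

lemma isMatching_falsifyingAssign (hC : ¬ AxiomOrTaut n C) :
    IsMatching n (falsifyingAssign C) := by
  intro i hi j hj i' hi' j' hj' ht ht'
  rw [falsifyingAssign_eq_some_true] at ht ht'
  have hpair : ∀ A ∈ FPHP n, A = {negLit (phpVar n i j), negLit (phpVar n i' j')} → False :=
    fun A hA hA' => hC (Or.inl ⟨A, hA, hA' ▸ insert_subset ht (singleton_subset_iff.mpr ht')⟩)
  constructor
  · rintro rfl
    by_contra hne
    exact hpair _ (pair_mem_FPHP_of_pigeon hi hj hj' hne) rfl
  · rintro rfl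
    by_contra hne
    exact hpair _ (pair_mem_FPHP_of_hole hi hi' hj hne) rfl

lemma card_freePigeons_falsifyingAssign :
    n + 1 ≤ (freePigeons n (falsifyingAssign C)).card + C.card := by
  have hcover : Icc 1 (n + 1) ⊆
      freePigeons n (falsifyingAssign C) ∪ C.image (phpPigeon n ∘ Prod.fst) := by
    intro i hi
    by_contra hout
    simp only [mem_union, mem_freePigeons, hi, true_and, not_or, not_forall, not_not] at hout
    obtain ⟨⟨j, hj, ht⟩, hout⟩ := hout
    rw [falsifyingAssign_eq_some_true] at ht
    exact hout (mem_image.mpr ⟨_, ht, phpPigeon_phpVar hj⟩)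
  have := (card_le_card hcover).trans (card_union_le _ _)
  simp only [Nat.card_Icc, add_tsub_cancel_right] at this
  exact this.trans (Nat.add_le_add_left card_image_le _)

lemma card_openHoles_falsifyingAssign (i : ℕ) :
    n ≤ (openHoles n (falsifyingAssign C) i).card + C.card := by
  have hcover : Icc 1 n ⊆
      openHoles n (falsifyingAssign C) i ∪ C.image (phpHole n ∘ Prod.fst) := by
    intro j hj
    by_contra hout
    simp only [mem_union, mem_openHoles, hj, true_and, not_or, not_and_or, not_forall,
      not_not] at hout
    obtain ⟨hused, hout⟩ := hout
    have hvar : ∃ i', falsifyingAssign C (phpVar n i' j) ≠ none := by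
      rcases hused with h | ⟨i', -, h⟩
      · exact ⟨i, h⟩
      · exact ⟨i', by simp [h]⟩
    obtain ⟨i', h⟩ := hvar
    obtain ⟨l, hl, hlv⟩ := mem_image.mp (mem_image_fst_of_falsifyingAssign_ne_none h)
    exact hout (mem_image.mpr ⟨l, hl, by simp [hlv, phpHole_phpVar hj]⟩)
  have := (card_le_card hcover).trans (card_union_le _ _)
  simp only [Nat.card_Icc, add_tsub_cancel_right] at this
  exact this.trans (Nat.add_le_add_left card_image_le _)

end FalsifyingAssign

theorem pow_le_size_of_isDerivFrom {n k d : ℕ} {s : WTree} (hs : s.IsDerivFrom (AxiomOrTaut n))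
    (hC : ¬ AxiomOrTaut n s.conc) (hk : s.conc.card ≤ k) (hd : d + k ≤ n + 1) :
    (n - k - d) ^ d ≤ s.size := by
  have hfree := card_freePigeons_falsifyingAssign (n := n) (C := s.conc)
  calc (n - k - d) ^ d ≤ potential n (falsifyingAssign s.conc) d :=
        pow_le_minProd (by omega) fun i _ => by
          have := card_openHoles_falsifyingAssign (n := n) (C := s.conc) i
          omega
    _ ≤ s.size := potential_le_size hs (isMatching_falsifyingAssign hC)
        (almostFalsifies_falsifyingAssign hC)

lemma rpow_self_le_pow {r b : ℝ} {d : ℕ} (hr : 1 ≤ r) (hrd : r ≤ d) (hrb : r ≤ b) :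
    r ^ r ≤ b ^ d :=
  calc r ^ r ≤ r ^ (d : ℝ) := Real.rpow_le_rpow_of_exponent_le hr hrd
    _ = r ^ d := Real.rpow_natCast r d
    _ ≤ b ^ d := pow_le_pow_left₀ (by linarith) hrb d

lemma div_eight_le_of_le {n m : ℕ} (h : n ≤ 8 * m) : (n : ℝ) / 8 ≤ m := by
  rw [div_le_iff₀ (by norm_num)]
  exact_mod_cast h.trans_eq (mul_comm 8 m)

lemma FPHP_nonempty {n : ℕ} (hn : 1 ≤ n) {A : Clause} (hA : A ∈ FPHP n) : A.Nonempty := by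
  rcases hA with (⟨i, -, -, rfl⟩ | ⟨i, j, k, -, -, -, -, -, rfl⟩) | ⟨i, j, k, -, -, -, -, -, rfl⟩
  · exact image_nonempty.mpr (nonempty_Icc.mpr hn)
  · exact insert_nonempty _ _
  · exact insert_nonempty _ _

lemma not_axiomOrTaut_empty {n : ℕ} (hn : 1 ≤ n) : ¬ AxiomOrTaut n ∅ := by
  rintro (⟨A, hA, hsub⟩ | ⟨v, -, hv, -⟩)
  · exact (FPHP_nonempty hn hA).ne_empty (subset_empty.mp hsub)
  · exact notMem_empty _ hv

/-- Thm. 8.5: for `k ≤ n/2`, every RTLW(k) refutation of `FPHP_n` has size at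
least `(1/2)·(n/8)^(n/8)`. -/
theorem stmt19 (n k : ℕ) (hk : 2 * k ≤ n) (t : WTree)
    (ht : IsRTLW (FPHP n) k t ∅) (hc : t.conc = ∅) :
    (1 / 2 : ℝ) * ((n : ℝ) / 8) ^ ((n : ℝ) / 8) ≤ (t.size : ℝ) := by
  have hsize : (1 : ℝ) ≤ t.size := by exact_mod_cast t.one_le_size
  have hpos : (0 : ℝ) ≤ ((n : ℝ) / 8) ^ ((n : ℝ) / 8) := by positivity
  rcases lt_or_ge n 8 with hn | hn
  · have : ((n : ℝ) / 8) ^ ((n : ℝ) / 8) ≤ 1 :=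
      Real.rpow_le_one (by positivity) (by simpa using div_eight_le_of_le (m := 1) (by omega))
        (by positivity)
    linarith
  obtain ⟨D, hDk, hDG, s, hs, rfl, hst⟩ := ht.exists_lemma (G := AxiomOrTaut n)
    (fun C hC => Or.inl ⟨C, hC, subset_rfl⟩) (hc ▸ not_axiomOrTaut_empty (by omega))
    (by simp [hc])
  have hpow := pow_le_size_of_isDerivFrom hs hDG hDk (d := n / 8 + 1) (by omega)
  calc (1 / 2 : ℝ) * ((n : ℝ) / 8) ^ ((n : ℝ) / 8) ≤ ((n : ℝ) / 8) ^ ((n : ℝ) / 8) := by linarith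
    _ ≤ ((n - k - (n / 8 + 1) : ℕ) : ℝ) ^ (n / 8 + 1) :=
        rpow_self_le_pow (by rw [le_div_iff₀ (by norm_num), one_mul]; exact_mod_cast hn)
          (div_eight_le_of_le (by omega)) (div_eight_le_of_le (by omega))
    _ ≤ t.size := by exact_mod_cast hpow.trans hst
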